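/- Assume K is an integral domain and |W| is invertible in K. Then: (ii) the family (a_χ(e_j))_{j∈J(χ,M)} is a basis of the K-module M_χ = {z ∈ M : σz = χ(σ)z for all σ ∈ W}; (iii) the family of residue classes (e_j mod _χM)_{j∈J(χ,M)} is a basis of the quotient K-module M/_χM, where _χM is the W-submodule of M generated by all elements χ(σ)z − σz (σ ∈ W, z ∈ M). -/

import Mathlib

noncomputable section

/-- The monomial action of `σ ∈ W` on the free module `I →₀ K`,
determined by `σ • e_i = γ_i(σ) • e_{σ i}`. -/
def monAct {K : Type*} [CommRing K] {W : Type*} [Group W] {I : Type*} [MulAction W I]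
    (γ : I → W → Kˣ) (σ : W) : (I →₀ K) →ₗ[K] (I →₀ K) :=
  Finsupp.lsum K fun i => ((γ i σ : Kˣ) : K) • Finsupp.lsingle (σ • i)

/-- The averaging operator
`a_χ = |W|⁻¹ Σ_{σ ∈ W} χ(σ)⁻¹ σ`, where `u` is the unit `|W|` of `K`. -/
def aChi {K : Type*} [CommRing K] {W : Type*} [Group W] [Fintype W] {I : Type*}
    [MulAction W I] (γ : I → W → Kˣ) (χ : W →* Kˣ) (u : Kˣ) :
    (I →₀ K) →ₗ[K] (I →₀ K) :=
  ((u⁻¹ : Kˣ) : K) • ∑ σ : W, (((χ σ)⁻¹ : Kˣ) : K) • monAct γ σ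

/-- The set `I(χ,M)`: those `i ∈ I` such that `γ_i = χ` on the stabilizer `W_i`. -/
def Ichi {K : Type*} [CommRing K] {W : Type*} [Group W] {I : Type*} [MulAction W I]
    (γ : I → W → Kˣ) (χ : W →* Kˣ) : Set I :=
  {i | ∀ σ : W, σ • i = i → γ i σ = χ σ}

/-- The `W`-submodule `_χM` of `M = I →₀ K` generated by the elements
`χ(σ) z − σ z` (as a `K`-submodule; the generating set is `W`-stable
up to such differences, so this agrees with the `W`-submodule generated). -/
def chiDiffSub {K : Type*} [CommRing K] {W : Type*} [Group W] {I : Type*}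
    [MulAction W I] (γ : I → W → Kˣ) (χ : W →* Kˣ) : Submodule K (I →₀ K) :=
  Submodule.span K {x | ∃ (σ : W) (z : I →₀ K),
    x = ((χ σ : Kˣ) : K) • z - monAct γ σ z}

/-- The submodule `M_χ = {z ∈ M | σ z = χ(σ) z for all σ ∈ W}`. -/
def chiFixSub {K : Type*} [CommRing K] {W : Type*} [Group W] {I : Type*}
    [MulAction W I] (γ : I → W → Kˣ) (χ : W →* Kˣ) : Submodule K (I →₀ K) where
  carrier := {z | ∀ σ : W, monAct γ σ z = ((χ σ : Kˣ) : K) • z}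
  add_mem' := by
    intro a b ha hb σ
    rw [map_add, ha σ, hb σ, smul_add]
  zero_mem' := by
    intro σ
    rw [map_zero, smul_zero]
  smul_mem' := by
    intro c a ha σ
    rw [map_smul, ha σ, smul_comm]


/-! The averaging operator `a_χ` is a projection of `M` onto `M_χ` whose kernel is `_χM`: it fixes
`M_χ`, and `z - a_χ z = |W|⁻¹ Σ_σ χ(σ)⁻¹ (χ(σ) z - σ z)`. So `M_χ` is spanned by the `a_χ(e_i)`, and
`a_χ` induces `M/_χM ≅ M_χ` sending `e_j mod _χM` to `a_χ(e_j)`, which reduces (iii) to (ii).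
For (ii): `a_χ(e_{τ i})` is a unit multiple of `a_χ(e_i)`; if `ρ ∈ W_i` has `γ_i(ρ) ≠ χ(ρ)`, this
gives `a_χ(e_i) = χ(ρ) γ_i(ρ)⁻¹ a_χ(e_i)`, forcing `a_χ(e_i) = 0` over a domain; and for
`i ∈ I(χ,M)`, `a_χ(e_i)` is supported on the orbit of `i` with coefficient `|W_i| / |W| ≠ 0` at `i`,
so the `a_χ(e_j)` for representatives `j` of distinct orbits are linearly independent. -/

section Linear

variable {R M : Type*} [CommRing R] [AddCommGroup M] [Module R M]

theorem Finsupp.linearIndependent_of_apply_eq_zero_of_ne [IsDomain R] {ι J : Type*}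
    {v : J → ι →₀ R} {k : J → ι} (hk : Function.Injective k)
    (hdiag : ∀ j, v j (k j) ≠ 0) (hoff : ∀ j l, j ≠ l → v j (k l) = 0) :
    LinearIndependent R v := by
  classical
  have hdiagonal :
      Finsupp.lcomapDomain (R := R) k hk ∘ v = fun j => Finsupp.single j (v j (k j)) := by
    ext j l
    rw [Function.comp_apply, Finsupp.lcomapDomain_apply, Finsupp.comapDomain_apply,
      Finsupp.single_apply]
    split_ifs with h
    · rw [h]
    · exact hoff j l h
  refine LinearIndependent.of_comp (Finsupp.lcomapDomain k hk) ?_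
  rw [hdiagonal]
  exact Finsupp.linearIndependent_single_of_ne_zero hdiag

theorem LinearMap.range_eq_span_single {ι : Type*} (f : (ι →₀ R) →ₗ[R] M) :
    LinearMap.range f = Submodule.span R (Set.range fun i => f (Finsupp.single i 1)) := by
  rw [← Finsupp.range_linearCombination]
  congr 1
  ext i
  simp

theorem LinearMap.IsProj.span_eq_of_range_le {m : Submodule R M} {f : M →ₗ[R] M}
    (hf : LinearMap.IsProj m f) {s : Set M} (hs : s ⊆ m)
    (hrange : LinearMap.range f ≤ Submodule.span R s) : Submodule.span R s = m :=
  le_antisymm (Submodule.span_le.2 hs) (hf.range ▸ hrange)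

theorem Submodule.linearIndependent_mk_of_le_ker {N : Submodule R M} {f : M →ₗ[R] M}
    (hN : N ≤ LinearMap.ker f) {ι : Type*} {v : ι → M} (hv : LinearIndependent R (f ∘ v)) :
    LinearIndependent R fun j => Submodule.Quotient.mk (p := N) (v j) :=
  LinearIndependent.of_comp (N.liftQ f hN) hv

theorem Submodule.span_range_mk_eq_top {N : Submodule R M} {f : M →ₗ[R] M}
    (hN : ∀ z, z - f z ∈ N) {ι : Type*} {v : ι → M}
    (hv : LinearMap.range f ≤ Submodule.span R (Set.range (f ∘ v))) :
    Submodule.span R (Set.range fun j => Submodule.Quotient.mk (p := N) (v j)) = ⊤ := by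
  have hmk : ∀ z, (Submodule.Quotient.mk (f z) : M ⧸ N) = Submodule.Quotient.mk z :=
    fun z => (Submodule.Quotient.eq N).2 (neg_sub z (f z) ▸ N.neg_mem (hN z))
  rw [Submodule.eq_top_iff']
  intro x
  obtain ⟨z, rfl⟩ := Submodule.Quotient.mk_surjective N x
  have hfz := Submodule.mem_map_of_mem (f := N.mkQ) (hv (LinearMap.mem_range_self f z))
  rw [Submodule.map_span, ← Set.range_comp] at hfz
  have hfamily : N.mkQ ∘ f ∘ v = fun j => Submodule.Quotient.mk (v j) :=
    funext fun j => hmk (v j)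
  rw [hfamily] at hfz
  rw [← hmk z]
  exact hfz

end Linear

namespace MulAction

variable {W I : Type*} [Group W] [MulAction W I] {S : Set I}
  (hS : ∀ i : I, ∃! j, j ∈ S ∧ j ∈ orbit W i)
include hS

theorem notMem_orbit_of_mem_of_ne {j j' : I} (hj : j ∈ S) (hj' : j' ∈ S) (hne : j ≠ j') :
    j' ∉ orbit W j :=
  fun h => hne ((hS j).unique ⟨hj, mem_orbit_self j⟩ ⟨hj', h⟩)

theorem exists_mem_smul_eq (i : I) : ∃ j ∈ S, ∃ τ : W, τ • j = i := by
  obtain ⟨j, ⟨hj, τ, hτ⟩, -⟩ := hS i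
  exact ⟨j, hj, τ⁻¹, by rw [← hτ, inv_smul_smul]⟩

end MulAction

section Monomial

variable {K : Type*} [CommRing K] {W : Type*} [Group W] {I : Type*} [MulAction W I]
  {γ : I → W → Kˣ}

theorem monAct_single (σ : W) (i : I) (c : K) :
    monAct γ σ (Finsupp.single i c) = Finsupp.single (σ • i) ((γ i σ : K) * c) := by
  simp [monAct, Finsupp.smul_single]

theorem monAct_mul (hγ : ∀ (i : I) (σ τ : W), γ i (σ * τ) = γ (τ • i) σ * γ i τ)
    (σ τ : W) (z : I →₀ K) : monAct γ (σ * τ) z = monAct γ σ (monAct γ τ z) := by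
  induction z using Finsupp.induction_linear with
  | zero => simp only [map_zero]
  | add a b ha hb => simp only [map_add, ha, hb]
  | single i c =>
    rw [monAct_single, monAct_single, monAct_single, hγ, mul_smul, Units.val_mul, mul_assoc]

variable [Fintype W] {χ : W →* Kˣ} {u : Kˣ}

theorem aChi_apply (z : I →₀ K) :
    aChi γ χ u z = ((u⁻¹ : Kˣ) : K) • ∑ σ : W, (((χ σ)⁻¹ : Kˣ) : K) • monAct γ σ z := by
  simp [aChi, LinearMap.sum_apply]

theorem sub_aChi_eq (hu : ((u : Kˣ) : K) = (Fintype.card W : K)) (z : I →₀ K) :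
    z - aChi γ χ u z = ((u⁻¹ : Kˣ) : K) •
      ∑ σ : W, (((χ σ)⁻¹ : Kˣ) : K) • (((χ σ : Kˣ) : K) • z - monAct γ σ z) := by
  simp only [aChi_apply, smul_sub, smul_smul, Finset.sum_sub_distrib, ← Units.val_mul,
    inv_mul_cancel, Units.val_one, one_smul, Finset.sum_const, Finset.card_univ,
    ← Nat.cast_smul_eq_nsmul K, ← hu]

theorem sub_aChi_mem_chiDiffSub (hu : ((u : Kˣ) : K) = (Fintype.card W : K)) (z : I →₀ K) :
    z - aChi γ χ u z ∈ chiDiffSub γ χ := by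
  rw [sub_aChi_eq hu]
  exact Submodule.smul_mem _ _ <| Submodule.sum_mem _ fun σ _ =>
    Submodule.smul_mem _ _ (Submodule.subset_span ⟨σ, z, rfl⟩)

theorem aChi_of_mem_chiFixSub (hu : ((u : Kˣ) : K) = (Fintype.card W : K)) {z : I →₀ K}
    (hz : z ∈ chiFixSub γ χ) : aChi γ χ u z = z := by
  have hz' : ∀ σ : W, monAct γ σ z = ((χ σ : Kˣ) : K) • z := hz
  rw [← sub_eq_zero, ← neg_sub, sub_aChi_eq hu]
  simp [hz']

theorem aChi_single_apply [DecidableEq I] (i k : I) :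
    aChi γ χ u (Finsupp.single i 1) k
      = ((u⁻¹ : Kˣ) : K) * ∑ σ ∈ Finset.univ.filter (fun σ : W => σ • i = k),
          (((χ σ)⁻¹ : Kˣ) : K) * (γ i σ : K) := by
  rw [aChi_apply, Finsupp.smul_apply, Finsupp.finsetSum_apply, smul_eq_mul, Finset.sum_filter]
  congr 1
  refine Finset.sum_congr rfl fun σ _ => ?_
  rw [Finsupp.smul_apply, monAct_single, Finsupp.single_apply, mul_one, smul_eq_mul, mul_ite,
    mul_zero]

theorem aChi_single_apply_of_notMem_orbit {i k : I} (hk : k ∉ MulAction.orbit W i) :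
    aChi γ χ u (Finsupp.single i 1) k = 0 := by
  classical
  rw [aChi_single_apply, Finset.sum_eq_zero, mul_zero]
  intro σ hσ
  exact absurd ((Finset.mem_filter.1 hσ).2 ▸ MulAction.mem_orbit i σ) hk

theorem aChi_single_apply_self {i : I} (hi : i ∈ Ichi γ χ) :
    aChi γ χ u (Finsupp.single i 1) i
      = ((u⁻¹ : Kˣ) : K) * (Nat.card (MulAction.stabilizer W i) : K) := by
  classical
  have hterm : ∀ σ ∈ Finset.univ.filter (fun σ : W => σ • i = i),
      (((χ σ)⁻¹ : Kˣ) : K) * (γ i σ : K) = 1 := fun σ hσ => by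
    rw [hi σ (Finset.mem_filter.1 hσ).2, ← Units.val_mul, inv_mul_cancel, Units.val_one]
  rw [aChi_single_apply, Finset.sum_congr rfl hterm, Finset.sum_const, nsmul_one,
    Nat.card_eq_fintype_card, Fintype.card_subtype]
  simp only [MulAction.mem_stabilizer_iff]

theorem aChi_single_apply_self_ne_zero [Nontrivial K]
    (hu : ((u : Kˣ) : K) = (Fintype.card W : K)) {i : I} (hi : i ∈ Ichi γ χ) :
    aChi γ χ u (Finsupp.single i 1) i ≠ 0 := by
  have hstab : IsUnit (Nat.card (MulAction.stabilizer W i) : K) := by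
    refine isUnit_of_dvd_unit (Nat.cast_dvd_cast (Subgroup.card_subgroup_dvd_card _)) ?_
    rw [Nat.card_eq_fintype_card, ← hu]
    exact u.isUnit
  rw [aChi_single_apply_self hi]
  exact ((u⁻¹).isUnit.mul hstab).ne_zero

variable (hγ : ∀ (i : I) (σ τ : W), γ i (σ * τ) = γ (τ • i) σ * γ i τ)
include hγ

theorem monAct_aChi (σ : W) (z : I →₀ K) :
    monAct γ σ (aChi γ χ u z) = ((χ σ : Kˣ) : K) • aChi γ χ u z := by
  simp only [aChi_apply, map_smul, map_sum, Finset.smul_sum, smul_smul, ← monAct_mul hγ]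
  refine Fintype.sum_equiv (Equiv.mulLeft σ) _ _ fun τ => ?_
  simp only [Equiv.coe_mulLeft, map_mul, mul_inv_rev, Units.val_mul]
  congr 1
  linear_combination (-(((u⁻¹ : Kˣ) : K) * (((χ τ)⁻¹ : Kˣ) : K))) * Units.mul_inv (χ σ)

theorem aChi_monAct (σ : W) (z : I →₀ K) :
    aChi γ χ u (monAct γ σ z) = ((χ σ : Kˣ) : K) • aChi γ χ u z := by
  simp only [aChi_apply, Finset.smul_sum, smul_smul, ← monAct_mul hγ]
  refine Fintype.sum_equiv (Equiv.mulRight σ) _ _ fun τ => ?_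
  simp only [Equiv.coe_mulRight, map_mul, mul_inv_rev, Units.val_mul]
  congr 1
  linear_combination (-(((u⁻¹ : Kˣ) : K) * (((χ τ)⁻¹ : Kˣ) : K))) * Units.mul_inv (χ σ)

theorem isProj_aChi (hu : ((u : Kˣ) : K) = (Fintype.card W : K)) :
    LinearMap.IsProj (chiFixSub γ χ) (aChi γ χ u) :=
  ⟨fun z σ => monAct_aChi hγ σ z, fun _ hz => aChi_of_mem_chiFixSub hu hz⟩

theorem chiDiffSub_le_ker_aChi : chiDiffSub γ χ ≤ LinearMap.ker (aChi γ χ u) := by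
  rw [chiDiffSub, Submodule.span_le]
  rintro _ ⟨σ, z, rfl⟩
  rw [SetLike.mem_coe, LinearMap.mem_ker, map_sub, map_smul, aChi_monAct hγ, sub_self]

theorem aChi_single_smul (τ : W) (i : I) :
    aChi γ χ u (Finsupp.single (τ • i) 1)
      = ((χ τ * (γ i τ)⁻¹ : Kˣ) : K) • aChi γ χ u (Finsupp.single i 1) := by
  have h := aChi_monAct (χ := χ) (u := u) hγ τ (Finsupp.single i 1)
  rw [monAct_single, mul_one, ← Finsupp.smul_single_one, map_smul] at h
  rw [Units.val_mul, mul_comm, ← smul_smul, ← h, smul_smul, ← Units.val_mul, inv_mul_cancel,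
    Units.val_one, one_smul]

theorem aChi_single_eq_zero [IsDomain K] {i : I} (hi : i ∉ Ichi γ χ) :
    aChi γ χ u (Finsupp.single i 1) = 0 := by
  obtain ⟨ρ, hρ, hne⟩ : ∃ ρ : W, ρ • i = i ∧ γ i ρ ≠ χ ρ := by
    simpa [Ichi] using hi
  have h := aChi_single_smul (χ := χ) (u := u) hγ ρ i
  rw [hρ] at h
  have h' : (((χ ρ * (γ i ρ)⁻¹ : Kˣ) : K) - 1) • aChi γ χ u (Finsupp.single i 1) = 0 := by
    rw [sub_smul, ← h, one_smul, sub_self]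
  refine (smul_eq_zero.1 h').resolve_left fun h1 => hne ?_
  rw [sub_eq_zero, ← Units.val_one, Units.val_inj, mul_inv_eq_one] at h1
  exact h1.symm

theorem aChi_single_mem_span [IsDomain K] {S : Set I}
    (hS : ∀ i : I, ∃! j, j ∈ S ∧ j ∈ MulAction.orbit W i) (i : I) :
    aChi γ χ u (Finsupp.single i 1) ∈ Submodule.span K (Set.range
      fun j : {j : I // j ∈ S ∧ j ∈ Ichi γ χ} => aChi γ χ u (Finsupp.single j.1 1)) := by
  obtain ⟨j, hjS, τ, rfl⟩ := MulAction.exists_mem_smul_eq hS i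
  rw [aChi_single_smul hγ]
  refine Submodule.smul_mem _ _ ?_
  by_cases hj : j ∈ Ichi γ χ
  · exact Submodule.subset_span ⟨⟨j, hjS, hj⟩, rfl⟩
  · rw [aChi_single_eq_zero hγ hj]
    exact Submodule.zero_mem _

end Monomial

/-- Theorem II.6 (ii) and (iii). If `K` is an integral
domain and `|W| ∈ U(K)`, then (ii) the family `(a_χ(e_j))_{j ∈ J(χ,M)}`
is a basis of `M_χ`, and (iii) the residue classes `(e_j mod _χM)_{j ∈ J(χ,M)}`
form a basis of `M/_χM`; here `J(χ,M) = I* ∩ I(χ,M)`. -/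
theorem basis_of_chiFixSub_and_quotient {K : Type*} [CommRing K] [IsDomain K]
    {W : Type*} [Group W] [Fintype W] {I : Type*} [MulAction W I]
    (γ : I → W → Kˣ) (hγ : ∀ (i : I) (σ τ : W), γ i (σ * τ) = γ (τ • i) σ * γ i τ)
    (χ : W →* Kˣ)
    (u : Kˣ) (hu : ((u : Kˣ) : K) = (Fintype.card W : K))
    (Istar : Set I)
    (hIstar : ∀ i : I, ∃! j, j ∈ Istar ∧ j ∈ MulAction.orbit W i)
    (w : {j : I // j ∈ Istar ∧ j ∈ Ichi γ χ} → (I →₀ K))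
    (hw : w = fun j => aChi γ χ u (Finsupp.single j.1 1))
    (q : {j : I // j ∈ Istar ∧ j ∈ Ichi γ χ} → ((I →₀ K) ⧸ chiDiffSub γ χ))
    (hq : q = fun j => Submodule.Quotient.mk (Finsupp.single j.1 1)) :
    (LinearIndependent K w ∧ Submodule.span K (Set.range w) = chiFixSub γ χ) ∧
    (LinearIndependent K q ∧ Submodule.span K (Set.range q) = ⊤) := by
  subst hq
  have hproj := isProj_aChi (χ := χ) (u := u) hγ hu
  have hrange : LinearMap.range (aChi γ χ u) ≤ Submodule.span K (Set.range w) := by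
    rw [LinearMap.range_eq_span_single, Submodule.span_le, Set.range_subset_iff, hw]
    exact aChi_single_mem_span hγ hIstar
  have hspan : Submodule.span K (Set.range w) = chiFixSub γ χ :=
    hproj.span_eq_of_range_le (by rw [hw, Set.range_subset_iff]; exact fun j => hproj.map_mem _)
      hrange
  have hli : LinearIndependent K w := by
    rw [hw]
    refine Finsupp.linearIndependent_of_apply_eq_zero_of_ne Subtype.val_injective
      (fun j => aChi_single_apply_self_ne_zero hu j.2.2) fun j l hne => ?_
    exact aChi_single_apply_of_notMem_orbit <|
      MulAction.notMem_orbit_of_mem_of_ne hIstar j.2.1 l.2.1 (Subtype.val_injective.ne hne)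
  subst hw
  exact ⟨⟨hli, hspan⟩, Submodule.linearIndependent_mk_of_le_ker (chiDiffSub_le_ker_aChi hγ) hli,
    Submodule.span_range_mk_eq_top (sub_aChi_mem_chiDiffSub hu) hrange⟩
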